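/- arXiv:1204.4554 — 6 statements merged into one kernel-verified Lean document; each statement's English description precedes it below -/
import Mathlib

section
/- Let X be a real-valued integrable random variable on a probability space, F a sub-σ-algebra, p ≥ 1 and ε > 0. Then E(|X|^p · 1_{|E(X|F)| > 2ε}) ≤ 2 E(|X|^p · 1_{|X| > ε}). -/
/-!
Let `A = {|E(X|F)| > 2ε}` and `B = {|X| > ε}`. Since `A` is `F`-measurable, conditional Jensen gives
`2ε P(A) ≤ E(|E(X|F)|; A) ≤ E(|X|; A) ≤ E(|X|; B) + ε P(A)`, i.e. `ε P(A) ≤ E(|X|; B)`.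
On `B` we have `ε^(p-1) |X| ≤ |X|^p`, hence `ε^p P(A) ≤ E(|X|^p; B)`, and finally
`E(|X|^p; A) ≤ E(|X|^p; B) + ε^p P(A) ≤ 2 E(|X|^p; B)`.
-/

open MeasureTheory
open scoped ENNReal

theorem Real.rpow_sub_one_mul_le_rpow {ε x p : ℝ} (hε : 0 < ε) (hεx : ε ≤ x) (hp : 1 ≤ p) :
    ε ^ (p - 1) * x ≤ x ^ p := by
  have hx : x ≠ 0 := (hε.trans_le hεx).ne'
  calc ε ^ (p - 1) * x ≤ x ^ (p - 1) * x := by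
        gcongr
        linarith
    _ = x ^ p := by rw [← Real.rpow_add_one hx]; ring_nf

section SetIntegral

variable {Ω : Type*} {mΩ : MeasurableSpace Ω} {μ : Measure Ω}

theorem setIntegral_le_setIntegral_add_mul_measureReal {f : Ω → ℝ} {A B : Set Ω} {c : ℝ}
    (hf : Integrable f μ) (hf0 : 0 ≤ f) (hA : NullMeasurableSet A μ) (hμA : μ A ≠ ∞)
    (hB : NullMeasurableSet B μ) (hc : 0 ≤ c) (hfc : ∀ ω ∈ A \ B, f ω ≤ c) :
    ∫ ω in A, f ω ∂μ ≤ ∫ ω in B, f ω ∂μ + c * μ.real A := by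
  have hpt : ∀ ω, A.indicator f ω ≤ B.indicator f ω + A.indicator (fun _ ↦ c) ω := by
    intro ω
    by_cases hωA : ω ∈ A
    · by_cases hωB : ω ∈ B
      · simpa [hωA, hωB] using hc
      · simpa [hωA, hωB] using hfc ω ⟨hωA, hωB⟩
    · simpa [hωA] using Set.indicator_nonneg (fun ω _ ↦ hf0 ω) ω
  have hfA : Integrable (A.indicator f) μ := hf.integrableOn.integrable_indicator₀ hA
  have hfB : Integrable (B.indicator f) μ := hf.integrableOn.integrable_indicator₀ hB
  have hcA : Integrable (A.indicator fun _ ↦ c) μ :=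
    (integrableOn_const hμA).integrable_indicator₀ hA
  calc ∫ ω in A, f ω ∂μ = ∫ ω, A.indicator f ω ∂μ := (integral_indicator₀ hA).symm
    _ ≤ ∫ ω, (B.indicator f ω + A.indicator (fun _ ↦ c) ω) ∂μ := integral_mono hfA (hfB.add hcA) hpt
    _ = ∫ ω in B, f ω ∂μ + c * μ.real A := by
        rw [integral_add hfB hcA, integral_indicator₀ hB, integral_indicator₀ hA, setIntegral_const,
          smul_eq_mul, mul_comm]

variable {X : Ω → ℝ} {p ε : ℝ}

theorem rpow_sub_one_mul_setIntegral_abs_le (hX : Integrable X μ)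
    (hXp : Integrable (fun ω ↦ |X ω| ^ p) μ) (hε : 0 < ε) (hp : 1 ≤ p) :
    ε ^ (p - 1) * ∫ ω in {ω | ε < |X ω|}, |X ω| ∂μ ≤ ∫ ω in {ω | ε < |X ω|}, |X ω| ^ p ∂μ := by
  rw [← integral_const_mul]
  exact setIntegral_mono_on_ae₀ (hX.abs.const_mul _).integrableOn hXp.integrableOn
    (nullMeasurableSet_lt aemeasurable_const hX.abs.aemeasurable)
    (ae_of_all _ fun ω hω ↦ Real.rpow_sub_one_mul_le_rpow hε (le_of_lt hω) hp)

theorem setIntegral_rpow_abs_le_two_mul {A : Set Ω} (hA : NullMeasurableSet A μ) (hμA : μ A ≠ ∞)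
    (hX : Integrable X μ) (hXp : Integrable (fun ω ↦ |X ω| ^ p) μ) (hε : 0 < ε) (hp : 1 ≤ p)
    (hAX : 2 * ε * μ.real A ≤ ∫ ω in A, |X ω| ∂μ) :
    ∫ ω in A, |X ω| ^ p ∂μ ≤ 2 * ∫ ω in {ω | ε < |X ω|}, |X ω| ^ p ∂μ := by
  set B := {ω | ε < |X ω|}
  have hB : NullMeasurableSet B μ := nullMeasurableSet_lt aemeasurable_const hX.abs.aemeasurable
  have hε_le : ε * μ.real A ≤ ∫ ω in B, |X ω| ∂μ := by
    have := setIntegral_le_setIntegral_add_mul_measureReal hX.abs (fun ω ↦ abs_nonneg (X ω))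
      hA hμA hB hε.le fun ω hω ↦ not_lt.1 hω.2
    linarith
  have hεp_le : ε ^ p * μ.real A ≤ ∫ ω in B, |X ω| ^ p ∂μ := by
    calc ε ^ p * μ.real A = ε ^ (p - 1) * (ε * μ.real A) := by
          rw [← mul_assoc, ← Real.rpow_add_one hε.ne']; ring_nf
      _ ≤ ε ^ (p - 1) * ∫ ω in B, |X ω| ∂μ := by gcongr
      _ ≤ ∫ ω in B, |X ω| ^ p ∂μ := rpow_sub_one_mul_setIntegral_abs_le hX hXp hε hp
  have := setIntegral_le_setIntegral_add_mul_measureReal hXp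
    (fun ω ↦ Real.rpow_nonneg (abs_nonneg (X ω)) p) hA hμA hB (Real.rpow_nonneg hε.le p)
    fun ω hω ↦ Real.rpow_le_rpow (abs_nonneg _) (not_lt.1 hω.2) (by linarith)
  linarith

end SetIntegral

/-- Lemma "curiouslma", first inequality: for `p ≥ 1` and `ε > 0`,
`E(|X|^p · 1_{|E(X|F)| > 2ε}) ≤ 2 E(|X|^p · 1_{|X| > ε})`. -/
theorem stmt0 {Ω : Type*} {m0 : MeasurableSpace Ω} (μ : Measure Ω) [IsProbabilityMeasure μ]
    (m : MeasurableSpace Ω) (hm : m ≤ m0) (X : Ω → ℝ) (hX : Integrable X μ)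
    (p : ℝ) (hp : 1 ≤ p) (hXp : Integrable (fun ω => |X ω| ^ p) μ)
    (ε : ℝ) (hε : 0 < ε) :
    ∫ ω in {ω | 2 * ε < |(μ[X|m]) ω|}, |X ω| ^ p ∂μ
      ≤ 2 * ∫ ω in {ω | ε < |X ω|}, |X ω| ^ p ∂μ := by
  have hA : MeasurableSet[m] {ω | 2 * ε < |(μ[X|m]) ω|} :=
    measurableSet_lt measurable_const (stronglyMeasurable_condExp (m := m)).measurable.abs
  refine setIntegral_rpow_abs_le_two_mul (mΩ := m0) (hm _ hA).nullMeasurableSet (measure_ne_top μ _)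
    hX hXp hε hp ?_
  calc 2 * ε * μ.real _ ≤ ∫ ω in {ω | 2 * ε < |(μ[X|m]) ω|}, |(μ[X|m]) ω| ∂μ :=
        setIntegral_ge_of_const_le_real (hm _ hA) (measure_ne_top μ _) (fun _ h ↦ h.le)
          integrable_condExp.abs.integrableOn
    _ ≤ _ := setIntegral_abs_condExp_le hA X
end

section
/- Let X be a real-valued integrable random variable, F a sub-σ-algebra, Y = X − E(X|F), p ≥ 1 and ε > 0. Then E(|X|^p · 1_{|Y| > 3ε}) ≤ 2 E(|X|^p · 1_{|X| > ε}). -/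
/-!
Write `Z = E(X|F)`, `A = {3ε < |X - Z|}`, `B = {ε < |X|}` and `C = {2ε < |Z|}`. Since
`A ⊆ B ∪ C` and `|X|^p ≤ ε^p` on `C \ B`, we get `∫_A |X|^p ≤ ∫_B |X|^p + ε^p P(C)`. As `C` is
`F`-measurable, `2ε P(C) ≤ ∫_C |Z| ≤ ∫_C |X| ≤ ∫_B |X| + ε P(C)`, so `ε P(C) ≤ ∫_B |X|`; multiplying
by `ε^(p-1) ≤ |X|^(p-1)` on `B` gives `ε^p P(C) ≤ ∫_B |X|^p`.
-/

open MeasureTheory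

section

variable {Ω : Type*} {mΩ : MeasurableSpace Ω} {μ : Measure Ω}

lemma setIntegral_union_le {f : Ω → ℝ} {s t : Set Ω} (hf : 0 ≤ f)
    (hfs : IntegrableOn f s μ) (hft : IntegrableOn f t μ) :
    ∫ ω in s ∪ t, f ω ∂μ ≤ ∫ ω in s, f ω ∂μ + ∫ ω in t, f ω ∂μ := by
  rw [← integral_add_measure hfs hft]
  exact integral_mono_measure (Measure.restrict_union_le s t) (ae_of_all _ hf)
    (Integrable.add_measure hfs hft)

lemma setIntegral_le_setIntegral_add_mul_measureReal_s1 [IsFiniteMeasure μ] {f : Ω → ℝ}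
    {s t u : Set Ω} {c : ℝ} (hf : 0 ≤ f) (hfi : Integrable f μ) (hc : 0 ≤ c)
    (hle : ∀ ω ∈ s \ t, f ω ≤ c) (hstu : s \ t ⊆ u) :
    ∫ ω in s, f ω ∂μ ≤ ∫ ω in t, f ω ∂μ + c * μ.real u := by
  have h_sdiff : ∫ ω in s \ t, f ω ∂μ ≤ c * μ.real (s \ t) := by
    have h_norm := norm_setIntegral_le_of_norm_le_const (f := f) (measure_lt_top μ (s \ t))
      fun ω hω => (Real.norm_of_nonneg (hf ω)).trans_le (hle ω hω)
    exact (le_abs_self _).trans h_norm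
  calc ∫ ω in s, f ω ∂μ
      ≤ ∫ ω in t ∪ s \ t, f ω ∂μ :=
        setIntegral_mono_set hfi.integrableOn (ae_of_all _ hf)
          (LE.le.eventuallyLE
            (by rw [Set.union_sdiff_self]; exact Set.subset_union_right))
    _ ≤ ∫ ω in t, f ω ∂μ + ∫ ω in s \ t, f ω ∂μ :=
        setIntegral_union_le hf hfi.integrableOn hfi.integrableOn
    _ ≤ ∫ ω in t, f ω ∂μ + c * μ.real u := by
        gcongr
        exact h_sdiff.trans (mul_le_mul_of_nonneg_left (measureReal_mono hstu) hc)

variable {x z : Ω → ℝ} {ε p : ℝ}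

lemma mul_measureReal_le_setIntegral_abs [IsFiniteMeasure μ] (hx : Integrable x μ) (hε : 0 ≤ ε)
    {s : Set Ω} (hs : 2 * ε * μ.real s ≤ ∫ ω in s, |x ω| ∂μ) :
    ε * μ.real s ≤ ∫ ω in {ω | ε < |x ω|}, |x ω| ∂μ := by
  have := setIntegral_le_setIntegral_add_mul_measureReal_s1 (μ := μ) (s := s) (t := {ω | ε < |x ω|})
    (fun ω => abs_nonneg (x ω)) hx.abs hε (fun ω hω => not_lt.1 hω.2) Set.sdiff_subset
  linarith

lemma rpow_mul_le_setIntegral_rpow_abs (hx : Integrable x μ)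
    (hxp : Integrable (fun ω => |x ω| ^ p) μ) (hp : 1 ≤ p) (hε : 0 < ε) {a : ℝ}
    (ha : ε * a ≤ ∫ ω in {ω | ε < |x ω|}, |x ω| ∂μ) :
    ε ^ p * a ≤ ∫ ω in {ω | ε < |x ω|}, |x ω| ^ p ∂μ := by
  have hB : NullMeasurableSet {ω | ε < |x ω|} μ :=
    nullMeasurableSet_lt aemeasurable_const hx.aemeasurable.abs
  have h_rpow_split : ∀ r : ℝ, r ≠ 0 → r ^ p = r ^ (p - 1) * r := fun r hr => by
    rw [← Real.rpow_add_one hr, sub_add_cancel]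
  calc ε ^ p * a = ε ^ (p - 1) * (ε * a) := by rw [h_rpow_split ε hε.ne', mul_assoc]
    _ ≤ ε ^ (p - 1) * ∫ ω in {ω | ε < |x ω|}, |x ω| ∂μ := by gcongr
    _ = ∫ ω in {ω | ε < |x ω|}, ε ^ (p - 1) * |x ω| ∂μ := (integral_const_mul _ _).symm
    _ ≤ ∫ ω in {ω | ε < |x ω|}, |x ω| ^ p ∂μ := by
        refine setIntegral_mono_on₀ (hx.abs.const_mul _).integrableOn hxp.integrableOn hB
          fun ω (hω : ε < |x ω|) => ?_
        rw [h_rpow_split _ (hε.trans hω).ne']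
        gcongr

lemma setIntegral_rpow_abs_le_of_setIntegral_abs_le [IsFiniteMeasure μ] (hx : Integrable x μ)
    (hz : Integrable z μ) (hxp : Integrable (fun ω => |x ω| ^ p) μ) (hp : 1 ≤ p) (hε : 0 < ε)
    (hC : MeasurableSet {ω | 2 * ε < |z ω|})
    (hcontract : ∫ ω in {ω | 2 * ε < |z ω|}, |z ω| ∂μ ≤ ∫ ω in {ω | 2 * ε < |z ω|}, |x ω| ∂μ) :
    ∫ ω in {ω | 3 * ε < |x ω - z ω|}, |x ω| ^ p ∂μ
      ≤ 2 * ∫ ω in {ω | ε < |x ω|}, |x ω| ^ p ∂μ := by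
  have hzC : 2 * ε * μ.real {ω | 2 * ε < |z ω|} ≤ ∫ ω in {ω | 2 * ε < |z ω|}, |z ω| ∂μ :=
    setIntegral_ge_of_const_le_real hC (measure_ne_top μ _) (fun ω hω => le_of_lt hω)
      hz.abs.integrableOn
  have hC_mass := rpow_mul_le_setIntegral_rpow_abs hx hxp hp hε
    (mul_measureReal_le_setIntegral_abs hx hε.le (hzC.trans hcontract))
  have hA_split := setIntegral_le_setIntegral_add_mul_measureReal_s1 (μ := μ)
    (s := {ω | 3 * ε < |x ω - z ω|}) (t := {ω | ε < |x ω|}) (u := {ω | 2 * ε < |z ω|})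
    (fun ω => Real.rpow_nonneg (abs_nonneg (x ω)) p) hxp (Real.rpow_nonneg hε.le p)
    (fun ω hω => Real.rpow_le_rpow (abs_nonneg _) (not_lt.1 hω.2) (by linarith))
    (fun ω ⟨hωA, hωB⟩ => by
      simp only [Set.mem_ofPred_eq, not_lt] at hωA hωB ⊢
      linarith [abs_sub (x ω) (z ω)])
  linarith

end

/-- Lemma "curiouslma", second inequality: with `Y = X − E(X|F)`,
`E(|X|^p · 1_{|Y| > 3ε}) ≤ 2 E(|X|^p · 1_{|X| > ε})`. -/
theorem stmt1 {Ω : Type*} {m0 : MeasurableSpace Ω} (μ : Measure Ω) [IsProbabilityMeasure μ]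
    (m : MeasurableSpace Ω) (hm : m ≤ m0) (X : Ω → ℝ) (hX : Integrable X μ)
    (p : ℝ) (hp : 1 ≤ p) (hXp : Integrable (fun ω => |X ω| ^ p) μ)
    (ε : ℝ) (hε : 0 < ε)
    (Y : Ω → ℝ) (hY : Y = fun ω => X ω - (μ[X|m]) ω) :
    ∫ ω in {ω | 3 * ε < |Y ω|}, |X ω| ^ p ∂μ
      ≤ 2 * ∫ ω in {ω | ε < |X ω|}, |X ω| ^ p ∂μ := by
  subst hY
  have hcondExp : StronglyMeasurable[m] (μ[X|m]) := stronglyMeasurable_condExp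
  have hC : MeasurableSet[m] {ω | 2 * ε < |(μ[X|m]) ω|} :=
    measurableSet_lt measurable_const hcondExp.measurable.abs
  exact setIntegral_rpow_abs_le_of_setIntegral_abs_le hX integrable_condExp hXp hp hε
    (hm _ hC) (setIntegral_abs_condExp_le hC X)
end

section
/- Let (d_i)_{1 ≤ i ≤ m} be square-integrable random variables adapted to a filtration (G_i) with E(d_i | G_{i-1}) = 0 a.s. Then for any ε > 0, E|Σ_{i=1}^m d_i| ≤ (ε Σ_{i=1}^m E|d_i|)^{1/2} + 2 Σ_{i=1}^m E(|d_i| 1_{|d_i| > ε}). -/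
open MeasureTheory ProbabilityTheory

/-!
Split each difference at level `ε`: `d i = a i + b i` with `a i = d i · 1{|d i| ≤ ε}` and
`b i = d i · 1{ε < |d i|}`, and let `e i = E[a i | G (i - 1)]`, so that
`d i = (a i - e i) + (b i + e i)`. The `a i - e i` are again martingale differences, hence
orthogonal in `L²`, and `E (a i - e i)² ≤ E (a i)² ≤ ε E|d i|`; Cauchy–Schwarz then bounds
`E|∑ (a i - e i)|` by the square root. Since `E[d i | G (i - 1)] = 0`, we have
`e i = -E[b i | G (i - 1)]`, so `E|b i + e i| ≤ 2 E|b i|`.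
-/

section

variable {Ω : Type*} {m0 : MeasurableSpace Ω} {μ : Measure Ω}

theorem integral_abs_add_le {f g : Ω → ℝ} (hf : Integrable f μ) (hg : Integrable g μ) :
    ∫ ω, |f ω + g ω| ∂μ ≤ ∫ ω, |f ω| ∂μ + ∫ ω, |g ω| ∂μ := by
  rw [← integral_add hf.abs hg.abs]
  exact integral_mono (hf.add hg).abs (hf.abs.add hg.abs) fun ω => abs_add_le _ _

theorem integral_abs_sum_add_le {ι : Type*} (t : Finset ι) {f g : ι → Ω → ℝ}
    (hf : ∀ i ∈ t, Integrable (f i) μ) (hg : ∀ i ∈ t, Integrable (g i) μ) :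
    ∫ ω, |∑ i ∈ t, (f i ω + g i ω)| ∂μ
      ≤ ∫ ω, |∑ i ∈ t, f i ω| ∂μ + ∑ i ∈ t, ∫ ω, |g i ω| ∂μ := by
  simp_rw [Finset.sum_add_distrib]
  refine (integral_abs_add_le (integrable_finsetSum _ hf) (integrable_finsetSum _ hg)).trans ?_
  gcongr
  rw [← integral_finsetSum _ fun i hi => (hg i hi).abs]
  exact integral_mono (integrable_finsetSum _ hg).abs
    (integrable_finsetSum _ fun i hi => (hg i hi).abs) fun ω => Finset.abs_sum_le_sum_abs _ _

theorem integral_abs_indicator {f : Ω → ℝ} {s : Set Ω} (hs : MeasurableSet s) :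
    ∫ ω, |s.indicator f ω| ∂μ = ∫ ω in s, |f ω| ∂μ := by
  simp_rw [← Real.norm_eq_abs, norm_indicator_eq_indicator_norm]
  exact integral_indicator hs

theorem integral_abs_le_sqrt_integral_sq [IsProbabilityMeasure μ] {f : Ω → ℝ}
    (hf : MemLp f 2 μ) : ∫ ω, |f ω| ∂μ ≤ Real.sqrt (∫ ω, f ω ^ 2 ∂μ) := by
  refine Real.le_sqrt_of_sq_le ?_
  have h := variance_eq_sub hf.abs
  simp only [Pi.pow_apply, Pi.abs_apply, sq_abs] at h
  linarith [variance_nonneg |f| μ]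

theorem integral_mul_eq_zero_of_condExp_ae_eq_zero {H : MeasurableSpace Ω} (hH : H ≤ m0)
    [SigmaFinite (μ.trim hH)] {f g : Ω → ℝ} (hg : StronglyMeasurable[H] g)
    (hgf : Integrable (g * f) μ) (hf : Integrable f μ) (hf0 : μ[f|H] =ᵐ[μ] 0) :
    ∫ ω, g ω * f ω ∂μ = 0 :=
  calc ∫ ω, g ω * f ω ∂μ = ∫ ω, (μ[g * f|H]) ω ∂μ := (integral_condExp hH).symm
    _ = ∫ _, (0 : ℝ) ∂μ := integral_congr_ae <| by
      filter_upwards [condExp_mul_of_stronglyMeasurable_left hg hgf hf, hf0] with ω h h0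
      simp [h, h0]
    _ = 0 := integral_zero _ _

theorem condExp_sub_condExp_ae_eq_zero {H : MeasurableSpace Ω} (hH : H ≤ m0)
    [SigmaFinite (μ.trim hH)] {a : Ω → ℝ} (ha : Integrable a μ) :
    μ[a - μ[a|H]|H] =ᵐ[μ] 0 := by
  filter_upwards [condExp_sub ha integrable_condExp H] with ω h
  rw [h, condExp_of_stronglyMeasurable hH stronglyMeasurable_condExp integrable_condExp]
  simp

theorem integral_sq_sub_condExp_le [IsProbabilityMeasure μ] {H : MeasurableSpace Ω}
    (hH : H ≤ m0) {a : Ω → ℝ} (ha : MemLp a 2 μ) :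
    ∫ ω, (a ω - μ[a|H] ω) ^ 2 ∂μ ≤ ∫ ω, a ω ^ 2 ∂μ := by
  have htotal := integral_condVar_add_variance_condExp hH ha
  rw [condVar, integral_condExp hH] at htotal
  have := variance_le_expectation_sq ha.aestronglyMeasurable
  simp only [Pi.pow_apply, Pi.sub_apply] at htotal this
  linarith [variance_nonneg (μ[a|H]) μ]

theorem integral_sq_sum_eq_sum_integral_sq [IsFiniteMeasure μ] {G : ℕ → MeasurableSpace Ω}
    (hGmono : Monotone G) (hGle : ∀ i, G i ≤ m0) {f : ℕ → Ω → ℝ}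
    (hf2 : ∀ i, 1 ≤ i → MemLp (f i) 2 μ) (hadapt : ∀ i, 1 ≤ i → StronglyMeasurable[G i] (f i))
    (hmart : ∀ i, 1 ≤ i → μ[f i|G (i - 1)] =ᵐ[μ] 0) (n : ℕ) :
    ∫ ω, (∑ i ∈ Finset.Icc 1 n, f i ω) ^ 2 ∂μ = ∑ i ∈ Finset.Icc 1 n, ∫ ω, f i ω ^ 2 ∂μ := by
  induction n with
  | zero => simp
  | succ n ih =>
    simp_rw [Finset.sum_Icc_succ_top (Nat.le_add_left 1 n), add_sq, mul_assoc]
    set S : Ω → ℝ := fun ω => ∑ i ∈ Finset.Icc 1 n, f i ω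
    have hS2 : MemLp S 2 μ := memLp_finsetSum _ fun i hi => hf2 i (Finset.mem_Icc.1 hi).1
    have hSm : StronglyMeasurable[G n] S := Finset.stronglyMeasurable_fun_sum _ fun i hi =>
      (hadapt i (Finset.mem_Icc.1 hi).1).mono (hGmono (Finset.mem_Icc.1 hi).2)
    have hf2' := hf2 (n + 1) n.succ_pos
    have hSf : Integrable (fun ω => S ω * f (n + 1) ω) μ := hS2.integrable_mul hf2'
    have hcross : ∫ ω, S ω * f (n + 1) ω ∂μ = 0 :=
      integral_mul_eq_zero_of_condExp_ae_eq_zero (hGle n) hSm hSf (hf2'.integrable one_le_two)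
        (hmart (n + 1) n.succ_pos)
    have hS2f : Integrable (fun ω => S ω ^ 2 + 2 * (S ω * f (n + 1) ω)) μ :=
      hS2.integrable_sq.add (hSf.const_mul 2)
    rw [integral_add hS2f hf2'.integrable_sq, integral_add hS2.integrable_sq (hSf.const_mul 2),
      integral_const_mul, hcross, ih]
    ring

theorem integral_abs_sum_sub_condExp_le [IsProbabilityMeasure μ] {G : ℕ → MeasurableSpace Ω}
    (hGmono : Monotone G) (hGle : ∀ i, G i ≤ m0) {a : ℕ → Ω → ℝ}
    (ha2 : ∀ i, 1 ≤ i → MemLp (a i) 2 μ) (hadapt : ∀ i, 1 ≤ i → StronglyMeasurable[G i] (a i))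
    (n : ℕ) :
    ∫ ω, |∑ i ∈ Finset.Icc 1 n, (a i ω - μ[a i|G (i - 1)] ω)| ∂μ
      ≤ Real.sqrt (∑ i ∈ Finset.Icc 1 n, ∫ ω, a i ω ^ 2 ∂μ) := by
  have hf2 : ∀ i, 1 ≤ i → MemLp (fun ω => a i ω - μ[a i|G (i - 1)] ω) 2 μ :=
    fun i hi => (ha2 i hi).sub ((ha2 i hi).condExp one_le_two)
  refine (integral_abs_le_sqrt_integral_sq
    (memLp_finsetSum _ fun i hi => hf2 i (Finset.mem_Icc.1 hi).1)).trans (Real.sqrt_le_sqrt ?_)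
  rw [integral_sq_sum_eq_sum_integral_sq hGmono hGle hf2
    (fun i hi => (hadapt i hi).sub (stronglyMeasurable_condExp.mono (hGmono (Nat.sub_le i 1))))
    (fun i hi => condExp_sub_condExp_ae_eq_zero (hGle _) ((ha2 i hi).integrable one_le_two)) n]
  exact Finset.sum_le_sum fun i hi =>
    integral_sq_sub_condExp_le (hGle _) (ha2 i (Finset.mem_Icc.1 hi).1)

theorem integral_abs_condExp_indicator_compl_le {H : MeasurableSpace Ω} {d : Ω → ℝ}
    {s : Set Ω} (hd : Integrable d μ) (hd0 : μ[d|H] =ᵐ[μ] 0) (hs : MeasurableSet[m0] s) :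
    ∫ ω, |μ[sᶜ.indicator d|H] ω| ∂μ ≤ ∫ ω in s, |d ω| ∂μ := by
  have h : μ[sᶜ.indicator d|H] =ᵐ[μ] -μ[s.indicator d|H] := by
    rw [Set.indicator_compl]
    filter_upwards [condExp_sub hd (hd.indicator hs) H, hd0] with ω h h0
    simp [h, h0]
  calc ∫ ω, |μ[sᶜ.indicator d|H] ω| ∂μ = ∫ ω, |μ[s.indicator d|H] ω| ∂μ :=
        integral_congr_ae (by filter_upwards [h] with ω hω; simp [hω])
    _ ≤ ∫ ω, |s.indicator d ω| ∂μ := integral_abs_condExp_le _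
    _ = ∫ ω in s, |d ω| ∂μ := integral_abs_indicator hs

theorem integral_abs_indicator_add_condExp_indicator_compl_le {H : MeasurableSpace Ω}
    {d : Ω → ℝ} {s : Set Ω} (hd : Integrable d μ) (hd0 : μ[d|H] =ᵐ[μ] 0)
    (hs : MeasurableSet[m0] s) :
    ∫ ω, |s.indicator d ω + μ[sᶜ.indicator d|H] ω| ∂μ ≤ 2 * ∫ ω in s, |d ω| ∂μ := by
  refine (integral_abs_add_le (hd.indicator hs) integrable_condExp).trans ?_
  rw [integral_abs_indicator hs, two_mul]
  exact add_le_add_right (integral_abs_condExp_indicator_compl_le hd hd0 hs) _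

theorem integral_abs_sum_le_sqrt_add_two_mul [IsProbabilityMeasure μ]
    {G : ℕ → MeasurableSpace Ω} (hGmono : Monotone G) (hGle : ∀ i, G i ≤ m0) {d : ℕ → Ω → ℝ}
    (hd2 : ∀ i, MemLp (d i) 2 μ) (hadapt : ∀ i, 1 ≤ i → StronglyMeasurable[G i] (d i))
    {n : ℕ} (hmart : ∀ i, 1 ≤ i → i ≤ n → μ[d i|G (i - 1)] =ᵐ[μ] 0) {s : ℕ → Set Ω}
    (hs : ∀ i, 1 ≤ i → MeasurableSet[G i] (s i)) :
    ∫ ω, |∑ i ∈ Finset.Icc 1 n, d i ω| ∂μ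
      ≤ Real.sqrt (∑ i ∈ Finset.Icc 1 n, ∫ ω, ((s i)ᶜ.indicator (d i) ω) ^ 2 ∂μ)
        + 2 * ∑ i ∈ Finset.Icc 1 n, ∫ ω in s i, |d i ω| ∂μ := by
  set a : ℕ → Ω → ℝ := fun i => (s i)ᶜ.indicator (d i)
  have hs0 : ∀ i, 1 ≤ i → MeasurableSet (s i) := fun i hi => hGle i _ (hs i hi)
  have ha2 : ∀ i, 1 ≤ i → MemLp (a i) 2 μ := fun i hi => (hd2 i).indicator (hs0 i hi).compl
  have hd1 : ∀ i, Integrable (d i) μ := fun i => (hd2 i).integrable one_le_two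
  have hsplit : ∀ i ω, d i ω
      = (a i ω - μ[a i|G (i - 1)] ω) + ((s i).indicator (d i) ω + μ[a i|G (i - 1)] ω) :=
    fun i ω => by
      have := congr_fun (Set.indicator_compl_add_self (s i) (d i)) ω
      simp only [Pi.add_apply] at this
      linarith
  calc ∫ ω, |∑ i ∈ Finset.Icc 1 n, d i ω| ∂μ
      = ∫ ω, |∑ i ∈ Finset.Icc 1 n, ((a i ω - μ[a i|G (i - 1)] ω)
          + ((s i).indicator (d i) ω + μ[a i|G (i - 1)] ω))| ∂μ := by simp_rw [← hsplit]
    _ ≤ ∫ ω, |∑ i ∈ Finset.Icc 1 n, (a i ω - μ[a i|G (i - 1)] ω)| ∂μ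
          + ∑ i ∈ Finset.Icc 1 n, ∫ ω, |(s i).indicator (d i) ω + μ[a i|G (i - 1)] ω| ∂μ :=
        integral_abs_sum_add_le _
          (fun i hi => ((ha2 i (Finset.mem_Icc.1 hi).1).integrable one_le_two).sub
            integrable_condExp)
          (fun i hi => ((hd1 i).indicator (hs0 i (Finset.mem_Icc.1 hi).1)).add integrable_condExp)
    _ ≤ Real.sqrt (∑ i ∈ Finset.Icc 1 n, ∫ ω, a i ω ^ 2 ∂μ)
          + 2 * ∑ i ∈ Finset.Icc 1 n, ∫ ω in s i, |d i ω| ∂μ := by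
      rw [Finset.mul_sum]
      gcongr with i hi
      · exact integral_abs_sum_sub_condExp_le hGmono hGle ha2
          (fun i hi => (hadapt i hi).indicator (hs i hi).compl) n
      · exact integral_abs_indicator_add_condExp_indicator_compl_le (hd1 i)
          (hmart i (Finset.mem_Icc.1 hi).1 (Finset.mem_Icc.1 hi).2) (hs0 i (Finset.mem_Icc.1 hi).1)

theorem integral_sq_indicator_compl_le_mul_integral_abs {d : Ω → ℝ} {ε : ℝ} (hε : 0 ≤ ε)
    (hd : Integrable d μ) :
    ∫ ω, ({ω | ε < |d ω|}ᶜ.indicator d ω) ^ 2 ∂μ ≤ ε * ∫ ω, |d ω| ∂μ := by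
  rw [← integral_const_mul]
  refine integral_mono_of_nonneg (ae_of_all _ fun ω => sq_nonneg _) (hd.abs.const_mul ε)
    (ae_of_all _ fun ω => ?_)
  dsimp only
  by_cases h : ε < |d ω|
  · rw [Set.indicator_of_notMem ((Set.notMem_compl_iff (s := {ω | ε < |d ω|})).2 h), zero_pow two_ne_zero]
    exact mul_nonneg hε (abs_nonneg _)
  · rw [Set.indicator_of_mem (Set.mem_compl (s := {ω | ε < |d ω|}) h), ← sq_abs, sq]
    exact mul_le_mul_of_nonneg_right (not_lt.1 h) (abs_nonneg _)

end

/-- Quantitative `L¹` bound for martingale differences: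
`E|Σ d_i| ≤ (ε Σ E|d_i|)^{1/2} + 2 Σ E(|d_i| 1_{|d_i| > ε})`. -/
theorem stmt6 {Ω : Type*} {m0 : MeasurableSpace Ω} (μ : Measure Ω) [IsProbabilityMeasure μ]
    (G : ℕ → MeasurableSpace Ω) (hGmono : Monotone G) (hGle : ∀ i, G i ≤ m0)
    (m : ℕ) (d : ℕ → Ω → ℝ)
    (hd2 : ∀ i, MemLp (d i) 2 μ)
    (hadapt : ∀ i, 1 ≤ i → StronglyMeasurable[G i] (d i))
    (hmart : ∀ i, 1 ≤ i → i ≤ m → μ[d i|G (i - 1)] =ᵐ[μ] 0)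
    (ε : ℝ) (hε : 0 < ε) :
    ∫ ω, |∑ i ∈ Finset.Icc 1 m, d i ω| ∂μ
      ≤ Real.sqrt (ε * ∑ i ∈ Finset.Icc 1 m, ∫ ω, |d i ω| ∂μ)
        + 2 * ∑ i ∈ Finset.Icc 1 m, ∫ ω in {ω | ε < |d i ω|}, |d i ω| ∂μ := by
  refine (integral_abs_sum_le_sqrt_add_two_mul hGmono hGle hd2 hadapt hmart
    (s := fun i => {ω | ε < |d i ω|})
    fun i hi => (measurable_abs.comp (hadapt i hi).measurable) measurableSet_Ioi).trans ?_
  rw [Finset.mul_sum (a := ε)]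
  gcongr with i
  exact integral_sq_indicator_compl_le_mul_integral_abs hε.le ((hd2 i).integrable one_le_two)
end

section
/- With the setting of the conditional ergodic theorem (measure-preserving bijection T, filtration F_i = T^{-i}(F_0), Z ∈ L^1 F_∞-measurable, Z_k = Z ∘ T^k), one has (1/n) E( max_{1 ≤ i ≤ n} |Z_i| | F_0 ) → 0 almost surely and in L^1 as n → ∞. -/
open MeasureTheory ProbabilityTheory Filter

/-!
Let `P f = E(f ∘ T | F₀)`. Because `F₀ ≤ T⁻¹ F₀`, the tower property makes `Pⁱ f` a version of
`E(f ∘ Tⁱ | F₀)`, and `P` is a positive operator preserving integrals, so Garsia's proof of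
Hopf's maximal ergodic inequality applies to it: `μ {sup_n (1/n) ∑_{i ≤ n} Pⁱ h > ε} ≤ ∫ h / ε`
for `h ≥ 0`. For every level `c ≥ 0`, `max_{i ≤ n} |Z_i| ≤ c + ∑_{i ≤ n} (|Z_i| - c)⁺`, hence
`E(max_{i ≤ n} |Z_i| | F₀) ≤ c + ∑_{i ≤ n} Pⁱ (|Z| - c)⁺`. Since `∫ (|Z| - c)⁺ → 0` as `c → ∞`,
integrating this bound gives the `L¹` convergence, and the maximal inequality applied to
`(|Z| - c)⁺` gives the almost sure one.
-/

theorem iSup_Icc_le_add_sum_max_sub (a : ℕ → ℝ) {c : ℝ} (hc : 0 ≤ c) (n : ℕ) :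
    ⨆ i : Set.Icc 1 n, a i ≤ c + ∑ i ∈ Finset.range n, max (a (i + 1) - c) 0 := by
  refine Real.iSup_le (fun ⟨i, hi1, hin⟩ => ?_) (by positivity)
  obtain ⟨j, rfl⟩ := Nat.exists_eq_add_of_le' hi1
  calc a (j + 1) ≤ c + max (a (j + 1) - c) 0 := by linarith [le_max_left (a (j + 1) - c) 0]
    _ ≤ c + ∑ i ∈ Finset.range n, max (a (i + 1) - c) 0 :=
      add_le_add_right (Finset.single_le_sum (f := fun i => max (a (i + 1) - c) 0)
        (fun _ _ => le_max_right _ _) (Finset.mem_range.2 hin)) c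

theorem tendsto_integral_max_sub_natCast {Ω : Type*} {m0 : MeasurableSpace Ω} {μ : Measure Ω}
    {f : Ω → ℝ} (hf : Integrable f μ) :
    Tendsto (fun c : ℕ => ∫ ω, max (f ω - c) 0 ∂μ) atTop (nhds 0) := by
  have hbound (c : ℕ) (ω : Ω) : ‖max (f ω - c) 0‖ ≤ |f ω| := by
    rw [Real.norm_of_nonneg (le_max_right _ _)]
    exact max_le (by linarith [le_abs_self (f ω), (Nat.cast_nonneg c : (0 : ℝ) ≤ c)])
      (abs_nonneg _)
  simpa using tendsto_integral_of_dominated_convergence (fun ω => |f ω|)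
    (fun c => (hf.aestronglyMeasurable.sub aestronglyMeasurable_const).sup
      aestronglyMeasurable_const)
    hf.abs (fun c => .of_forall (hbound c)) (.of_forall fun ω =>
      tendsto_atTop_of_eventually_const (i₀ := ⌈f ω⌉₊) fun c hc =>
        max_eq_right (sub_nonpos.2 ((Nat.le_ceil _).trans (Nat.cast_le.2 hc))))

theorem tendsto_zero_of_forall_le_inv_mul {u η : ℕ → ℝ} (hu : ∀ n, 0 ≤ u n)
    (hη : Tendsto η atTop (nhds 0)) (h : ∀ k, ∃ C, ∀ n, u n ≤ (n : ℝ)⁻¹ * (C + n * η k)) :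
    Tendsto u atTop (nhds 0) := by
  refine tendsto_order.2 ⟨fun a ha => .of_forall fun n => ha.trans_le (hu n), fun ε hε => ?_⟩
  obtain ⟨k, hk⟩ := (hη.eventually (gt_mem_nhds (half_pos hε))).exists
  obtain ⟨C, hC⟩ := h k
  have hCn : Tendsto (fun n : ℕ => C * (n : ℝ)⁻¹) atTop (nhds 0) := by
    simpa using tendsto_inv_atTop_nhds_zero_nat.const_mul C
  filter_upwards [hCn.eventually (gt_mem_nhds (half_pos hε)), eventually_ge_atTop 1]
    with n hn hn1
  have hn0 : (n : ℝ) ≠ 0 := by positivity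
  calc u n ≤ (n : ℝ)⁻¹ * (C + n * η k) := hC n
    _ = C * (n : ℝ)⁻¹ + η k := by field_simp
    _ < ε := by linarith

theorem MeasureTheory.MeasurePreserving.setIntegral_preimage {α β E : Type*}
    [NormedAddCommGroup E] [NormedSpace ℝ E] {_ : MeasurableSpace α} {_ : MeasurableSpace β}
    {μ : Measure α} {ν : Measure β} {T : α → β} (hT : MeasurePreserving T μ ν) {g : β → E}
    (hg : AEStronglyMeasurable g ν) {s : Set β} (hs : MeasurableSet s) :
    ∫ x in T ⁻¹' s, g (T x) ∂μ = ∫ y in s, g y ∂ν := by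
  conv_rhs => rw [← hT.map_eq]
  exact (setIntegral_map hs (by rwa [hT.map_eq]) hT.measurable.aemeasurable).symm

namespace ConditionalErgodic

variable {Ω : Type*} {F0 m0 : MeasurableSpace Ω} {μ : Measure Ω} {T : Ω → Ω}

noncomputable def markovOp (μ : Measure Ω) (T : Ω → Ω) (F0 : MeasurableSpace Ω) (f : Ω → ℝ) :
    Ω → ℝ :=
  μ[f ∘ T | F0]

theorem integrable_markovOp (f : Ω → ℝ) : Integrable (markovOp μ T F0 f) μ :=
  integrable_condExp

theorem stronglyMeasurable_markovOp (f : Ω → ℝ) : StronglyMeasurable[F0] (markovOp μ T F0 f) :=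
  stronglyMeasurable_condExp

theorem integrable_markovOp_iterate {f : Ω → ℝ} (hf : Integrable f μ) :
    ∀ i, Integrable ((markovOp μ T F0)^[i] f) μ
  | 0 => hf
  | i + 1 => by rw [Function.iterate_succ_apply']; exact integrable_markovOp _

theorem markovOp_mono (hT : MeasurePreserving T μ μ) {f g : Ω → ℝ} (hf : Integrable f μ)
    (hg : Integrable g μ) (hfg : f ≤ᵐ[μ] g) : markovOp μ T F0 f ≤ᵐ[μ] markovOp μ T F0 g :=
  condExp_mono (hT.integrable_comp_of_integrable hf) (hT.integrable_comp_of_integrable hg)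
    (hT.quasiMeasurePreserving.tendsto_ae.eventually hfg)

theorem markovOp_nonneg (hT : MeasurePreserving T μ μ) {f : Ω → ℝ} (hf : 0 ≤ᵐ[μ] f) :
    0 ≤ᵐ[μ] markovOp μ T F0 f :=
  condExp_nonneg (hT.quasiMeasurePreserving.tendsto_ae.eventually hf)

theorem integrable_iSup_Icc_comp_iterate (hT : MeasurePreserving T μ μ) {f : Ω → ℝ}
    (hf0 : 0 ≤ f) (hf : Integrable f μ) (n : ℕ) :
    Integrable (fun ω => ⨆ i : Set.Icc 1 n, f (T^[i] ω)) μ := by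
  have hsum : Integrable (fun ω => ∑ i ∈ Finset.range n, f (T^[i + 1] ω)) μ :=
    integrable_finsetSum _ fun i _ => (hT.iterate _).integrable_comp_of_integrable hf
  refine hsum.mono' (AEMeasurable.iSup fun i : Set.Icc 1 n =>
      ((hT.iterate i).integrable_comp_of_integrable hf).aemeasurable).aestronglyMeasurable
    (.of_forall fun ω => ?_)
  rw [Real.norm_of_nonneg (Real.iSup_nonneg fun i => hf0 _)]
  have hmax (x : Ω) : max (f x) 0 = f x := max_eq_left (hf0 x)
  simpa [hmax] using iSup_Icc_le_add_sum_max_sub (fun i => f (T^[i] ω)) le_rfl n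

variable [IsFiniteMeasure μ]

theorem integral_markovOp (hF0 : F0 ≤ m0) (hT : MeasurePreserving T μ μ) {f : Ω → ℝ}
    (hf : AEStronglyMeasurable f μ) : ∫ ω, markovOp μ T F0 f ω ∂μ = ∫ ω, f ω ∂μ := by
  rw [markovOp, integral_condExp hF0]
  conv_rhs => rw [← hT.map_eq]
  exact (integral_map hT.measurable.aemeasurable (by rwa [hT.map_eq])).symm

theorem integral_markovOp_iterate (hF0 : F0 ≤ m0) (hT : MeasurePreserving T μ μ) {f : Ω → ℝ}
    (hf : Integrable f μ) : ∀ i, ∫ ω, (markovOp μ T F0)^[i] f ω ∂μ = ∫ ω, f ω ∂μ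
  | 0 => rfl
  | i + 1 => by
    rw [Function.iterate_succ_apply', integral_markovOp hF0 hT
      (integrable_markovOp_iterate hf i).aestronglyMeasurable,
      integral_markovOp_iterate hF0 hT hf i]

theorem setIntegral_markovOp_iterate (hF0 : F0 ≤ m0) (hF0T : F0 ≤ F0.comap T)
    (hT : MeasurePreserving T μ μ) {f : Ω → ℝ} (hf : Integrable f μ) :
    ∀ i {s : Set Ω}, MeasurableSet[F0] s →
      ∫ ω in s, (markovOp μ T F0)^[i] f ω ∂μ = ∫ ω in s, f (T^[i] ω) ∂μ
  | 0, _, _ => rfl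
  | i + 1, _, hs => by
    obtain ⟨s, hs', rfl⟩ := hF0T _ hs
    have hfi := integrable_markovOp_iterate (T := T) (F0 := F0) hf i
    rw [Function.iterate_succ_apply', markovOp,
      setIntegral_condExp hF0 (hT.integrable_comp_of_integrable hfi) hs,
      Function.comp_def, hT.setIntegral_preimage hfi.aestronglyMeasurable (hF0 _ hs'),
      setIntegral_markovOp_iterate hF0 hF0T hT hf i hs',
      ← hT.setIntegral_preimage (g := fun ω => f (T^[i] ω))
        ((hT.iterate i).integrable_comp_of_integrable hf).aestronglyMeasurable (hF0 _ hs')]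
    simp only [Function.iterate_succ_apply]

theorem markovOp_iterate_ae_eq_condExp (hF0 : F0 ≤ m0) (hF0T : F0 ≤ F0.comap T)
    (hT : MeasurePreserving T μ μ) {f : Ω → ℝ} (hf : Integrable f μ) (i : ℕ) :
    (markovOp μ T F0)^[i + 1] f =ᵐ[μ] μ[f ∘ T^[i + 1] | F0] := by
  refine ae_eq_condExp_of_forall_setIntegral_eq hF0
    ((hT.iterate (i + 1)).integrable_comp_of_integrable hf)
    (fun _ _ _ => (integrable_markovOp_iterate hf (i + 1)).integrableOn)
    (fun _ hs _ => setIntegral_markovOp_iterate hF0 hF0T hT hf (i + 1) hs) ?_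
  rw [Function.iterate_succ_apply']
  exact (stronglyMeasurable_markovOp _).aestronglyMeasurable

theorem setIntegral_pos_nonneg_of_le_add_markovOp (hF0 : F0 ≤ m0) (hT : MeasurePreserving T μ μ)
    {M g : Ω → ℝ} (hMm : Measurable M) (hM0 : 0 ≤ M) (hM : Integrable M μ) (hg : Integrable g μ)
    (hle : ∀ᵐ ω ∂μ, 0 < M ω → M ω ≤ g ω + markovOp μ T F0 M ω) :
    0 ≤ ∫ ω in {ω | 0 < M ω}, g ω ∂μ := by
  set E := {ω | 0 < M ω}
  have hE : MeasurableSet E := measurableSet_lt measurable_const hMm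
  have hPM := integrable_markovOp (μ := μ) (T := T) (F0 := F0) M
  have hM_E : ∫ ω in E, M ω ∂μ = ∫ ω, M ω ∂μ :=
    setIntegral_eq_integral_of_forall_compl_eq_zero fun ω hω =>
      le_antisymm (not_lt.1 hω) (hM0 ω)
  have hPM_E : ∫ ω in E, markovOp μ T F0 M ω ∂μ ≤ ∫ ω, M ω ∂μ :=
    (setIntegral_le_integral hPM (markovOp_nonneg hT (.of_forall hM0))).trans_eq
      (integral_markovOp hF0 hT hM.aestronglyMeasurable)
  have hM_le : ∫ ω in E, M ω ∂μ ≤ ∫ ω in E, g ω ∂μ + ∫ ω in E, markovOp μ T F0 M ω ∂μ := by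
    rw [← integral_add hg.integrableOn hPM.integrableOn]
    exact setIntegral_mono_on_ae hM.integrableOn (hg.add hPM).integrableOn hE hle
  linarith

theorem setIntegral_exists_pos_nonneg_of_le_add_markovOp (hF0 : F0 ≤ m0)
    (hT : MeasurePreserving T μ μ) {S : ℕ → Ω → ℝ} (hS0 : S 0 = 0) (hSm : ∀ n, Measurable (S n))
    (hS : ∀ n, Integrable (S n) μ) {g : Ω → ℝ} (hg : Integrable g μ)
    (hrec : ∀ n, S (n + 1) ≤ᵐ[μ] g + markovOp μ T F0 (S n)) (N : ℕ) :
    0 ≤ ∫ ω in {ω | ∃ n ≤ N, 0 < S n ω}, g ω ∂μ := by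
  have hN : (Finset.range (N + 1)).Nonempty := Finset.nonempty_range_add_one
  set M := (Finset.range (N + 1)).sup' hN S
  have hM_apply (ω : Ω) : M ω = (Finset.range (N + 1)).sup' hN fun n => S n ω :=
    Finset.sup'_apply hN S ω
  have hSM (n : ℕ) (hn : n ∈ Finset.range (N + 1)) : S n ≤ M := Finset.le_sup' S hn
  have hM : Integrable M μ :=
    Finset.sup'_induction (p := (Integrable · μ)) hN S (fun _ h₁ _ h₂ => h₁.sup h₂) fun n _ => hS n
  have hE : {ω | 0 < M ω} = {ω | ∃ n ≤ N, 0 < S n ω} := by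
    ext ω
    simp [hM_apply, Finset.lt_sup'_iff]
  rw [← hE]
  refine setIntegral_pos_nonneg_of_le_add_markovOp hF0 hT
    (Finset.measurable_sup' hN fun n _ => hSm n) (hS0 ▸ hSM 0 (by simp)) hM hg ?_
  have hmono : ∀ᵐ ω ∂μ, ∀ n ∈ Finset.range (N + 1),
      markovOp μ T F0 (S n) ω ≤ markovOp μ T F0 M ω :=
    (Finset.range (N + 1)).eventually_all.2 fun n hn =>
      markovOp_mono hT (hS n) hM (.of_forall (hSM n hn))
  filter_upwards [ae_all_iff.2 hrec, hmono] with ω hrec hmono hpos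
  obtain ⟨m, hm, hMm⟩ := Finset.exists_mem_eq_sup' hN fun n => S n ω
  rw [← hM_apply] at hMm
  cases m with
  | zero => simp [hMm, hS0] at hpos
  | succ k =>
    rw [hMm]
    exact (hrec k).trans (add_le_add_right (hmono k (by simp at hm ⊢; omega)) _)

theorem markovOp_sum_iterate_sub_const (hF0 : F0 ≤ m0) (hT : MeasurePreserving T μ μ)
    {h : Ω → ℝ} (hh : Integrable h μ) (n : ℕ) (c : ℝ) :
    markovOp μ T F0 (fun ω => ∑ i ∈ Finset.range n, (markovOp μ T F0)^[i + 1] h ω - c)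
      =ᵐ[μ] fun ω => ∑ i ∈ Finset.range n, (markovOp μ T F0)^[i + 2] h ω - c := by
  set f : ℕ → Ω → ℝ := fun i => (markovOp μ T F0)^[i + 1] h ∘ T
  have hf (i : ℕ) : Integrable (f i) μ :=
    hT.integrable_comp_of_integrable (integrable_markovOp_iterate hh _)
  have hcomp : (fun ω => ∑ i ∈ Finset.range n, (markovOp μ T F0)^[i + 1] h ω - c) ∘ T
      = (∑ i ∈ Finset.range n, f i) - fun _ => c := by
    ext ω; simp [f]
  rw [markovOp, hcomp]
  filter_upwards [condExp_sub (integrable_finsetSum' (Finset.range n) fun i _ => hf i)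
      (integrable_const c) F0,
    condExp_finsetSum (s := Finset.range n) (fun i _ => hf i) F0] with ω hsub hsum
  simp only [hsub, Pi.sub_apply, hsum, Finset.sum_apply, condExp_const hF0,
    Function.iterate_succ_apply' _ (_ + 1)]
  rfl

theorem measure_exists_sum_markovOp_iterate_gt_le (hF0 : F0 ≤ m0) (hT : MeasurePreserving T μ μ)
    {h : Ω → ℝ} (hh0 : 0 ≤ h) (hh : Integrable h μ) {ε : ℝ} (hε : 0 < ε) :
    μ {ω | ∃ n : ℕ, n * ε < ∑ i ∈ Finset.range n, (markovOp μ T F0)^[i + 1] h ω}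
      ≤ ENNReal.ofReal (ε⁻¹ * ∫ ω, h ω ∂μ) := by
  set S : ℕ → Ω → ℝ := fun n ω => ∑ i ∈ Finset.range n, (markovOp μ T F0)^[i + 1] h ω - n * ε
  set E : ℕ → Set Ω := fun N => {ω | ∃ n ≤ N, 0 < S n ω}
  have hSm (n : ℕ) : Measurable (S n) := by
    refine (Finset.measurable_fun_sum _ fun i _ => ?_).sub_const _
    rw [Function.iterate_succ_apply']
    exact ((stronglyMeasurable_markovOp _).mono hF0).measurable
  have hS (n : ℕ) : Integrable (S n) μ :=
    (integrable_finsetSum _ fun i _ => integrable_markovOp_iterate hh (i + 1)).sub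
      (integrable_const ((n : ℝ) * ε))
  have hrec (n : ℕ) :
      S (n + 1) ≤ᵐ[μ] (fun ω => markovOp μ T F0 h ω - ε) + markovOp μ T F0 (S n) := by
    filter_upwards [markovOp_sum_iterate_sub_const hF0 hT hh n (n * ε)] with ω hω
    simp only [S, Pi.add_apply, hω, Finset.sum_range_succ', add_assoc, Nat.reduceAdd,
      Function.iterate_one]
    push_cast
    linarith
  have hE (N : ℕ) : ε * μ.real (E N) ≤ ∫ ω, h ω ∂μ := by
    have hPh := integrable_markovOp (μ := μ) (T := T) (F0 := F0) h
    have hgarsia := setIntegral_exists_pos_nonneg_of_le_add_markovOp hF0 hT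
      (by ext; simp [S]) hSm hS (g := fun ω => markovOp μ T F0 h ω - ε)
      (hPh.sub (integrable_const ε)) hrec N
    rw [integral_sub hPh.integrableOn (integrable_const ε).integrableOn, setIntegral_const,
      smul_eq_mul] at hgarsia
    have hPh_le := (setIntegral_le_integral (s := E N) hPh
      (markovOp_nonneg hT (.of_forall hh0))).trans_eq
      (integral_markovOp hF0 hT hh.aestronglyMeasurable)
    linarith
  have hunion :
      {ω | ∃ n : ℕ, n * ε < ∑ i ∈ Finset.range n, (markovOp μ T F0)^[i + 1] h ω} = ⋃ N, E N := by
    ext ω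
    simp only [Set.mem_ofPred_eq, Set.mem_iUnion, S, E, sub_pos]
    exact ⟨fun ⟨n, hn⟩ => ⟨n, n, le_rfl, hn⟩, fun ⟨_, n, _, hn⟩ => ⟨n, hn⟩⟩
  have hmono : Monotone E := fun N N' hN ω ⟨n, hn, hpos⟩ => ⟨n, hn.trans hN, hpos⟩
  rw [hunion, hmono.measure_iUnion]
  refine iSup_le fun N => ?_
  rw [← ofReal_measureReal]
  refine ENNReal.ofReal_le_ofReal ?_
  rw [le_inv_mul_iff₀ hε]
  exact hE N

theorem condExp_sum_comp_iterate_ae_eq (hF0 : F0 ≤ m0) (hF0T : F0 ≤ F0.comap T)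
    (hT : MeasurePreserving T μ μ) {g : Ω → ℝ} (hg : Integrable g μ) (n : ℕ) :
    μ[fun ω => ∑ i ∈ Finset.range n, g (T^[i + 1] ω) | F0]
      =ᵐ[μ] fun ω => ∑ i ∈ Finset.range n, (markovOp μ T F0)^[i + 1] g ω := by
  have hint (i : ℕ) : Integrable (g ∘ T^[i + 1]) μ :=
    (hT.iterate _).integrable_comp_of_integrable hg
  have hsum : (fun ω => ∑ i ∈ Finset.range n, g (T^[i + 1] ω))
      = ∑ i ∈ Finset.range n, g ∘ T^[i + 1] := by
    ext ω; simp
  have hversions : ∀ᵐ ω ∂μ, ∀ i ∈ Finset.range n,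
      μ[g ∘ T^[i + 1] | F0] ω = (markovOp μ T F0)^[i + 1] g ω :=
    (Finset.range n).eventually_all.2 fun i _ =>
      (markovOp_iterate_ae_eq_condExp hF0 hF0T hT hg i).symm
  rw [hsum]
  filter_upwards [condExp_finsetSum (fun i _ => hint i) F0, hversions] with ω hω hversions
  rw [hω, Finset.sum_apply]
  exact Finset.sum_congr rfl hversions

theorem condExp_iSup_Icc_comp_iterate_le (hF0 : F0 ≤ m0) (hF0T : F0 ≤ F0.comap T)
    (hT : MeasurePreserving T μ μ) {f : Ω → ℝ} (hf0 : 0 ≤ f) (hf : Integrable f μ) {c : ℝ}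
    (hc : 0 ≤ c) (n : ℕ) :
    μ[fun ω => ⨆ i : Set.Icc 1 n, f (T^[i] ω) | F0] ≤ᵐ[μ]
      fun ω => c + ∑ i ∈ Finset.range n,
        (markovOp μ T F0)^[i + 1] (fun x => max (f x - c) 0) ω := by
  have hW : Integrable (fun x => max (f x - c) 0) μ := (hf.sub (integrable_const c)).pos_part
  have hsum : Integrable (fun ω => ∑ i ∈ Finset.range n, max (f (T^[i + 1] ω) - c) 0) μ :=
    integrable_finsetSum _ fun i _ => (hT.iterate _).integrable_comp_of_integrable hW
  filter_upwards [condExp_mono (m := F0) (integrable_iSup_Icc_comp_iterate hT hf0 hf n)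
      ((integrable_const c).add hsum)
      (.of_forall fun ω => iSup_Icc_le_add_sum_max_sub (fun i => f (T^[i] ω)) hc n),
    condExp_add (integrable_const c) hsum F0, condExp_sum_comp_iterate_ae_eq hF0 hF0T hT hW n]
    with ω hmono hadd hsum
  rw [condExp_const hF0, Pi.add_apply, hsum] at hadd
  exact hmono.trans_eq hadd

theorem ae_exists_sum_markovOp_iterate_le (hF0 : F0 ≤ m0) (hT : MeasurePreserving T μ μ)
    {h : ℕ → Ω → ℝ} (hh0 : ∀ c, 0 ≤ h c) (hh : ∀ c, Integrable (h c) μ)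
    (hlim : Tendsto (fun c => ∫ ω, h c ω ∂μ) atTop (nhds 0)) {η : ℝ} (hη : 0 < η) :
    ∀ᵐ ω ∂μ, ∃ c, ∀ n : ℕ, ∑ i ∈ Finset.range n, (markovOp μ T F0)^[i + 1] (h c) ω ≤ n * η := by
  simp only [ae_iff, not_exists, not_forall, not_le]
  have hbound : Tendsto (fun c => ENNReal.ofReal (η⁻¹ * ∫ ω, h c ω ∂μ)) atTop (nhds 0) := by
    simpa using ENNReal.tendsto_ofReal (hlim.const_mul η⁻¹)
  refine le_antisymm (ge_of_tendsto' hbound fun c => (measure_mono ?_).trans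
    (measure_exists_sum_markovOp_iterate_gt_le hF0 hT (hh0 c) (hh c) hη)) zero_le
  exact fun ω hω => hω c

theorem ae_tendsto_inv_mul_condExp_iSup_Icc_comp_iterate (hF0 : F0 ≤ m0)
    (hF0T : F0 ≤ F0.comap T) (hT : MeasurePreserving T μ μ) {f : Ω → ℝ} (hf0 : 0 ≤ f)
    (hf : Integrable f μ) :
    ∀ᵐ ω ∂μ, Tendsto (fun n : ℕ => (n : ℝ)⁻¹ *
      μ[fun ω' => ⨆ i : Set.Icc 1 n, f (T^[i] ω') | F0] ω) atTop (nhds 0) := by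
  have hgood (k : ℕ) := ae_exists_sum_markovOp_iterate_le hF0 hT
    (h := fun c x => max (f x - c) 0) (fun c x => le_max_right _ _)
    (fun c => (hf.sub (integrable_const _)).pos_part) (tendsto_integral_max_sub_natCast hf)
    (η := 1 / ((k : ℝ) + 1)) (by positivity)
  have hX0 (n : ℕ) : 0 ≤ᵐ[μ] μ[fun ω' => ⨆ i : Set.Icc 1 n, f (T^[i] ω') | F0] :=
    condExp_nonneg (.of_forall fun ω => Real.iSup_nonneg fun i => hf0 _)
  filter_upwards [ae_all_iff.2 hgood, ae_all_iff.2 hX0, ae_all_iff.2 fun c : ℕ => ae_all_iff.2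
    (condExp_iSup_Icc_comp_iterate_le hF0 hF0T hT hf0 hf c.cast_nonneg)] with ω hgood hX0 hXle
  refine tendsto_zero_of_forall_le_inv_mul (fun n => mul_nonneg (by positivity) (hX0 n))
    tendsto_one_div_add_atTop_nhds_zero_nat fun k => ?_
  obtain ⟨c, hc⟩ := hgood k
  exact ⟨c, fun n => mul_le_mul_of_nonneg_left ((hXle c n).trans (add_le_add_right (hc n) _))
    (by positivity)⟩

theorem tendsto_integral_abs_inv_mul_condExp_iSup_Icc_comp_iterate (hF0 : F0 ≤ m0)
    (hF0T : F0 ≤ F0.comap T) (hT : MeasurePreserving T μ μ) {f : Ω → ℝ} (hf0 : 0 ≤ f)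
    (hf : Integrable f μ) :
    Tendsto (fun n : ℕ => ∫ ω, |(n : ℝ)⁻¹ *
      μ[fun ω' => ⨆ i : Set.Icc 1 n, f (T^[i] ω') | F0] ω| ∂μ) atTop (nhds 0) := by
  refine tendsto_zero_of_forall_le_inv_mul (fun n => integral_nonneg fun _ => abs_nonneg _)
    (tendsto_integral_max_sub_natCast hf) fun c => ⟨μ.real Set.univ * c, fun n => ?_⟩
  set X := μ[fun ω' => ⨆ i : Set.Icc 1 n, f (T^[i] ω') | F0]
  set W := fun x => max (f x - c) 0
  have hW : Integrable W μ := (hf.sub (integrable_const _)).pos_part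
  have hX0 : 0 ≤ᵐ[μ] X := condExp_nonneg (.of_forall fun ω => Real.iSup_nonneg fun i => hf0 _)
  have habs : ∀ᵐ ω ∂μ, |(n : ℝ)⁻¹ * X ω| = (n : ℝ)⁻¹ * X ω := by
    filter_upwards [hX0] with ω hω
    exact abs_of_nonneg (mul_nonneg (by positivity) hω)
  have hPW := integrable_finsetSum (Finset.range n) fun i _ =>
    integrable_markovOp_iterate (T := T) (F0 := F0) hW (i + 1)
  rw [integral_congr_ae habs, integral_const_mul]
  gcongr
  calc ∫ ω, X ω ∂μ
      ≤ ∫ ω, ((c : ℝ) + ∑ i ∈ Finset.range n, (markovOp μ T F0)^[i + 1] W ω) ∂μ :=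
        integral_mono_ae integrable_condExp ((integrable_const _).add hPW)
          (condExp_iSup_Icc_comp_iterate_le hF0 hF0T hT hf0 hf c.cast_nonneg n)
    _ = μ.real Set.univ * c + n * ∫ ω, W ω ∂μ := by
        rw [integral_add (integrable_const _) hPW, integral_finsetSum _ fun i _ =>
          integrable_markovOp_iterate hW (i + 1)]
        simp only [integral_markovOp_iterate hF0 hT hW]
        simp

end ConditionalErgodic

open ConditionalErgodic in
theorem stmt8_general {Ω : Type*} {m0 : MeasurableSpace Ω} (μ : Measure Ω) [IsProbabilityMeasure μ]
    (T : Ω → Ω) (hT : MeasurePreserving T μ μ)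
    (F0 : MeasurableSpace Ω) (hF0 : F0 ≤ m0) (hF0T : F0 ≤ F0.comap T)
    (Z : Ω → ℝ) (hZint : Integrable Z μ) :
    (∀ᵐ ω ∂μ,
      Tendsto
        (fun n : ℕ => (n : ℝ)⁻¹ *
          (μ[(fun ω' => ⨆ i : Set.Icc 1 n, |Z (T^[(i : ℕ)] ω')|)|F0]) ω)
        atTop (nhds 0))
    ∧ Tendsto
        (fun n : ℕ => ∫ ω,
          |(n : ℝ)⁻¹ * (μ[(fun ω' => ⨆ i : Set.Icc 1 n, |Z (T^[(i : ℕ)] ω')|)|F0]) ω| ∂μ)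
        atTop (nhds 0) :=
  ⟨ae_tendsto_inv_mul_condExp_iSup_Icc_comp_iterate (f := fun ω => |Z ω|) hF0 hF0T hT
      (fun _ => abs_nonneg _) hZint.abs,
    tendsto_integral_abs_inv_mul_condExp_iSup_Icc_comp_iterate (f := fun ω => |Z ω|) hF0 hF0T hT
      (fun _ => abs_nonneg _) hZint.abs⟩

/-- In the setting of the conditional ergodic theorem,
`(1/n) E( max_{1 ≤ i ≤ n} |Z ∘ T^i| | F₀ ) → 0` almost surely and in `L¹`. -/
theorem stmt8 {Ω : Type*} {m0 : MeasurableSpace Ω} (μ : Measure Ω) [IsProbabilityMeasure μ]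
    (T : Ω → Ω) (hT : MeasurePreserving T μ μ) (hTbij : Function.Bijective T)
    (Tz : ℤ → Ω → Ω) (hTz0 : Tz 0 = id) (hTzsucc : ∀ k : ℤ, Tz (k + 1) = T ∘ Tz k)
    (hTzmeas : ∀ k, Measurable (Tz k))
    (F0 : MeasurableSpace Ω) (hF0 : F0 ≤ m0) (hF0T : F0 ≤ F0.comap T)
    (Z : Ω → ℝ) (hZint : Integrable Z μ)
    (hZmeas : StronglyMeasurable[⨆ k : ℤ, F0.comap (Tz k)] Z) :
    (∀ᵐ ω ∂μ,
      Tendsto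
        (fun n : ℕ => (n : ℝ)⁻¹ *
          (μ[(fun ω' => ⨆ i : Set.Icc 1 n, |Z (T^[(i : ℕ)] ω')|)|F0]) ω)
        atTop (nhds 0))
    ∧ Tendsto
        (fun n : ℕ => ∫ ω,
          |(n : ℝ)⁻¹ * (μ[(fun ω' => ⨆ i : Set.Icc 1 n, |Z (T^[(i : ℕ)] ω')|)|F0]) ω| ∂μ)
        atTop (nhds 0) :=
  stmt8_general μ T hT F0 hF0 hF0T Z hZint
end

section
/- Let (X_i) be a stationary sequence X_i = X_0 ∘ T^i with X_0 ∈ L^2, F_0-measurable, centered, where T is measure-preserving, F_i = T^{-i}(F_0) is a filtration. If Σ_{k ≥ 0} ‖X_0 E(X_k | F_0)‖_1 < ∞, then the series η = E(X_0² | I) + 2 Σ_{k>0} E(X_0 X_k | I) converges absolutely in L^1; in particular Σ_{k ≥ 1} ‖E(X_0 X_k | I)‖_1 < ∞. -/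
open MeasureTheory ProbabilityTheory Filter

/-!
Since `X₀` is `F₀`-measurable, pulling it out of `E(· | F₀)` gives
`E(X₀ X_k | F₀) = X₀ E(X_k | F₀)`. The invariant σ-algebra `I` is coarser than `F₀`, so by the
tower property and the `L¹`-contractivity of conditional expectation
`‖E(X₀ X_k | I)‖₁ ≤ ‖E(X₀ X_k | F₀)‖₁ = ‖X₀ E(X_k | F₀)‖₁`, and the series is dominated by the
summable one.
-/

section CondExp

variable {Ω : Type*} {m m' m0 : MeasurableSpace Ω} {μ : Measure Ω}

theorem integral_abs_condExp_le_of_le (hm : m ≤ m') (hm' : m' ≤ m0)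
    [SigmaFinite (μ.trim hm')] (f : Ω → ℝ) :
    ∫ ω, |μ[f|m] ω| ∂μ ≤ ∫ ω, |μ[f|m'] ω| ∂μ :=
  calc ∫ ω, |μ[f|m] ω| ∂μ = ∫ ω, |μ[μ[f|m']|m] ω| ∂μ :=
        integral_congr_ae <| (condExp_condExp_of_le hm hm').mono fun _ h => congrArg abs h.symm
    _ ≤ ∫ ω, |μ[f|m'] ω| ∂μ := integral_abs_condExp_le _

theorem integral_abs_condExp_mul_le_of_stronglyMeasurable_left {f g : Ω → ℝ}
    (hm : m ≤ m') (hm' : m' ≤ m0) [SigmaFinite (μ.trim hm')] (hf : StronglyMeasurable[m'] f)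
    (hfg : Integrable (f * g) μ) (hg : Integrable g μ) :
    ∫ ω, |μ[f * g|m] ω| ∂μ ≤ ∫ ω, |f ω * μ[g|m'] ω| ∂μ :=
  calc ∫ ω, |μ[f * g|m] ω| ∂μ ≤ ∫ ω, |μ[f * g|m'] ω| ∂μ :=
        integral_abs_condExp_le_of_le hm hm' _
    _ = ∫ ω, |f ω * μ[g|m'] ω| ∂μ :=
        integral_congr_ae <| (condExp_mul_of_stronglyMeasurable_left hf hfg hg).mono
          fun _ h => congrArg abs h

end CondExp

theorem stmt9_general {Ω : Type*} {m0 : MeasurableSpace Ω} (μ : Measure Ω) [IsProbabilityMeasure μ]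
    (T : Ω → Ω) (hT : MeasurePreserving T μ μ)
    (F0 : MeasurableSpace Ω) (hF0 : F0 ≤ m0)
    (X0 : Ω → ℝ) (hX0 : MemLp X0 2 μ) (hX0meas : StronglyMeasurable[F0] X0)
    (hsum : Summable fun k : ℕ => ∫ ω, |X0 ω * (μ[X0 ∘ T^[k]|F0]) ω| ∂μ) :
    Summable fun k : ℕ =>
      ∫ ω, |(μ[fun ω' => X0 ω' * X0 (T^[k + 1] ω')|MeasurableSpace.invariants T]) ω| ∂μ := by
  -- `F0` is the last `MeasurableSpace` instance in scope: `invariants T` is formed with respect to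
  -- it, and `m0` has to be passed to `MeasurePreserving.iterate` by hand.
  have hXk : ∀ k, MemLp (X0 ∘ T^[k]) 2 μ := fun k =>
    hX0.comp_measurePreserving (@MeasurePreserving.iterate _ m0 _ _ hT k)
  have hbound : ∀ k : ℕ,
      ∫ ω, |(μ[X0 * (X0 ∘ T^[k + 1])|MeasurableSpace.invariants T]) ω| ∂μ ≤
        ∫ ω, |X0 ω * (μ[X0 ∘ T^[k + 1]|F0]) ω| ∂μ := fun k =>
    integral_abs_condExp_mul_le_of_stronglyMeasurable_left (MeasurableSpace.invariants_le T) hF0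
      hX0meas (hX0.integrable_mul (hXk (k + 1))) ((hXk (k + 1)).integrable one_le_two)
  exact .of_nonneg_of_le (fun k => integral_nonneg fun ω => abs_nonneg _) hbound
    ((summable_nat_add_iff 1).2 hsum)

/-- If `Σ_{k ≥ 0} ‖X₀ E(X_k|F₀)‖₁ < ∞` for the stationary sequence `X_k = X₀ ∘ T^k`,
then the series `η = E(X₀²|I) + 2 Σ_{k>0} E(X₀X_k|I)` converges absolutely in `L¹`;
in particular `Σ_{k ≥ 1} ‖E(X₀X_k|I)‖₁ < ∞`. -/
theorem stmt9 {Ω : Type*} {m0 : MeasurableSpace Ω} (μ : Measure Ω) [IsProbabilityMeasure μ]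
    (T : Ω → Ω) (hT : MeasurePreserving T μ μ) (hTbij : Function.Bijective T)
    (F0 : MeasurableSpace Ω) (hF0 : F0 ≤ m0) (hF0T : F0 ≤ F0.comap T)
    (X0 : Ω → ℝ) (hX0 : MemLp X0 2 μ) (hX0meas : StronglyMeasurable[F0] X0)
    (hX0cent : ∫ ω, X0 ω ∂μ = 0)
    (hsum : Summable fun k : ℕ => ∫ ω, |X0 ω * (μ[X0 ∘ T^[k]|F0]) ω| ∂μ) :
    Summable fun k : ℕ =>
      ∫ ω, |(μ[fun ω' => X0 ω' * X0 (T^[k + 1] ω')|MeasurableSpace.invariants T]) ω| ∂μ :=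
  stmt9_general μ T hT F0 hF0 X0 hX0 hX0meas hsum
end

section
/- Let Y_i, Y_{i+1} ∈ L^2 be adapted to (G_i) (Y_j being G_j-measurable). Then for any ε > 0, E((E(Y_{i+1}|G_{i-1}))²) ≤ ε E|E(Y_{i+1}|G_{i-1})| + ε E(|Y_{i+1}| 1_{|Y_{i+1}| > ε}) + E(Y_{i+1}² 1_{|Y_{i+1}| > ε}). -/
/-!
Write `c = E(Y|G)` and `h = E(|Y| 1_{|Y|>ε} | G)`. Conditioning the pointwise bound
`|Y| ≤ ε + |Y| 1_{|Y|>ε}` gives `|c| ≤ ε + h`, hence `c² ≤ |c| (ε + h) ≤ ε |c| + ε h + h²`.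
Integrating, `E h = E(|Y| 1_{|Y|>ε})`, and `E h² ≤ E(Y² 1_{|Y|>ε})` because conditional
expectation contracts `L²` (conditional variances are nonnegative).
-/

open MeasureTheory ProbabilityTheory

namespace MeasureTheory

variable {Ω : Type*} {m m0 : MeasurableSpace Ω} {μ : Measure Ω}

lemma sq_condExp_ae_le_condExp_sq (hm : m ≤ m0) [IsFiniteMeasure μ] {f : Ω → ℝ}
    (hf : MemLp f 2 μ) : μ[f|m] ^ 2 ≤ᵐ[μ] μ[f ^ 2|m] := by
  have hvar : 0 ≤ᵐ[μ] Var[f; μ | m] :=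
    condExp_nonneg (ae_of_all _ fun ω => sq_nonneg _)
  filter_upwards [hvar, condVar_ae_eq_condExp_sq_sub_sq_condExp hm hf] with ω h0 hω
  simp only [hω, Pi.zero_apply, Pi.sub_apply] at h0
  exact sub_nonneg.mp h0

lemma integral_sq_condExp_le (hm : m ≤ m0) [IsFiniteMeasure μ] {f : Ω → ℝ}
    (hf : MemLp f 2 μ) : ∫ ω, (μ[f|m] ω) ^ 2 ∂μ ≤ ∫ ω, (f ω) ^ 2 ∂μ :=
  calc ∫ ω, (μ[f|m] ω) ^ 2 ∂μ ≤ ∫ ω, μ[f ^ 2|m] ω ∂μ :=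
        integral_mono_ae (hf.condExp one_le_two).integrable_sq integrable_condExp
          (sq_condExp_ae_le_condExp_sq hm hf)
    _ = ∫ ω, (f ω) ^ 2 ∂μ := integral_condExp hm

lemma nullMeasurableSet_lt_abs {f : Ω → ℝ} (hf : AEMeasurable f μ) (ε : ℝ) :
    NullMeasurableSet {ω | ε < |f ω|} μ :=
  nullMeasurableSet_lt aemeasurable_const hf.abs

noncomputable def absTail (f : Ω → ℝ) (ε : ℝ) : Ω → ℝ := {ω | ε < |f ω|}.indicator fun ω => |f ω|

lemma abs_le_add_absTail (f : Ω → ℝ) {ε : ℝ} (hε : 0 ≤ ε) (ω : Ω) :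
    |f ω| ≤ ε + absTail f ε ω := by
  by_cases h : ε < |f ω|
  · simp [absTail, h, hε]
  · simpa [absTail, h] using not_lt.mp h

lemma absTail_nonneg (f : Ω → ℝ) (ε : ℝ) : 0 ≤ absTail f ε :=
  Set.indicator_nonneg fun _ _ => abs_nonneg _

lemma memLp_absTail {p : ENNReal} {f : Ω → ℝ} (hf : MemLp f p μ) (ε : ℝ) :
    MemLp (absTail f ε) p μ :=
  hf.mono (hf.1.norm.indicator₀ (nullMeasurableSet_lt_abs hf.1.aemeasurable ε))
    (ae_of_all _ fun ω => (norm_indicator_le_norm_self _ ω).trans_eq (norm_abs_eq_norm _))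

lemma integral_absTail {f : Ω → ℝ} (hf : AEStronglyMeasurable f μ) (ε : ℝ) :
    ∫ ω, absTail f ε ω ∂μ = ∫ ω in {ω | ε < |f ω|}, |f ω| ∂μ :=
  integral_indicator₀ (nullMeasurableSet_lt_abs hf.aemeasurable ε)

lemma integral_absTail_sq {f : Ω → ℝ} (hf : AEStronglyMeasurable f μ) (ε : ℝ) :
    ∫ ω, (absTail f ε ω) ^ 2 ∂μ = ∫ ω in {ω | ε < |f ω|}, (f ω) ^ 2 ∂μ := by
  rw [← integral_indicator₀ (nullMeasurableSet_lt_abs hf.aemeasurable ε)]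
  congr 1 with ω
  by_cases h : ε < |f ω| <;> simp [absTail, h]

lemma abs_condExp_ae_le_add_condExp_absTail (hm : m ≤ m0) [IsFiniteMeasure μ] {f : Ω → ℝ}
    (hf : Integrable f μ) {ε : ℝ} (hε : 0 ≤ ε) :
    ∀ᵐ ω ∂μ, |μ[f|m] ω| ≤ ε + μ[absTail f ε|m] ω := by
  have htail : Integrable (absTail f ε) μ :=
    hf.abs.indicator₀ (nullMeasurableSet_lt_abs hf.aemeasurable ε)
  have hmono : μ[(|f|)|m] ≤ᵐ[μ] μ[(fun _ => ε) + absTail f ε|m] :=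
    condExp_mono hf.abs ((integrable_const ε).add htail)
      (ae_of_all _ (abs_le_add_absTail f hε))
  filter_upwards [abs_condExp_ae_le_condExp_abs (m := m) f, hmono,
    condExp_add (m := m) (integrable_const ε) htail] with ω h1 h2 h3
  rw [h3, condExp_const hm] at h2
  exact h1.trans h2

end MeasureTheory

/-- `E((E(Y_{i+1}|G_{i-1}))²) ≤ ε E|E(Y_{i+1}|G_{i-1})| + ε E(|Y_{i+1}| 1_{|Y_{i+1}|>ε})
+ E(Y_{i+1}² 1_{|Y_{i+1}|>ε})`. -/
theorem stmt15 {Ω : Type*} {m0 : MeasurableSpace Ω} (μ : Measure Ω) [IsProbabilityMeasure μ]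
    (G : MeasurableSpace Ω) (hG : G ≤ m0)
    (Y : Ω → ℝ) (hY : MemLp Y 2 μ) (ε : ℝ) (hε : 0 < ε) :
    ∫ ω, ((μ[Y|G]) ω) ^ 2 ∂μ
      ≤ ε * ∫ ω, |(μ[Y|G]) ω| ∂μ + ε * ∫ ω in {ω | ε < |Y ω|}, |Y ω| ∂μ
        + ∫ ω in {ω | ε < |Y ω|}, (Y ω) ^ 2 ∂μ := by
  set c := μ[Y|G]
  set h := μ[absTail Y ε|G]
  have hc : MemLp c 2 μ := hY.condExp one_le_two
  have hh : MemLp h 2 μ := (memLp_absTail hY ε).condExp one_le_two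
  have hpointwise : ∀ᵐ ω ∂μ, (c ω) ^ 2 ≤ ε * |c ω| + ε * h ω + (h ω) ^ 2 := by
    filter_upwards [abs_condExp_ae_le_add_condExp_absTail hG (hY.integrable one_le_two) hε.le,
      condExp_nonneg (m := G) (ae_of_all μ (absTail_nonneg Y ε))] with ω hch hh0
    change |c ω| ≤ ε + h ω at hch
    change 0 ≤ h ω at hh0
    nlinarith [abs_nonneg (c ω), sq_abs (c ω)]
  have hc1 : Integrable (fun ω => ε * |c ω|) μ := (hc.integrable one_le_two).abs.const_mul ε
  have hh1 : Integrable (fun ω => ε * h ω) μ := (hh.integrable one_le_two).const_mul ε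
  have hch1 : Integrable (fun ω => ε * |c ω| + ε * h ω) μ := hc1.add hh1
  calc ∫ ω, (c ω) ^ 2 ∂μ ≤ ∫ ω, (ε * |c ω| + ε * h ω + (h ω) ^ 2) ∂μ :=
        integral_mono_ae hc.integrable_sq (hch1.add hh.integrable_sq) hpointwise
    _ = ε * ∫ ω, |c ω| ∂μ + ε * ∫ ω, h ω ∂μ + ∫ ω, (h ω) ^ 2 ∂μ := by
        rw [integral_add hch1 hh.integrable_sq, integral_add hc1 hh1, integral_const_mul,
          integral_const_mul]
    _ ≤ _ := by
        rw [integral_condExp hG, integral_absTail hY.1, ← integral_absTail_sq hY.1]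
        exact add_le_add_right (integral_sq_condExp_le hG (memLp_absTail hY ε)) _
end
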